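/- Let F be a free group and E a finitely generated subgroup of F. If A' is a finitely generated subgroup of a free group M, K is a free factor of M with A' * K a free factor of M, and M/⟨⟨K⟩⟩ ≅ E, then rank(A') ≤ rank(E). -/

import Mathlib

/-- The family of subgroups `H i` forms an internal free product decomposition of `M`. -/
def IsInternalFreeProduct {M : Type*} [Group M] {ι : Type*} (H : ι → Subgroup M) : Prop :=
  Function.Bijective (Monoid.CoprodI.lift fun i => (H i).subtype)

/-- The rank bounding argument from the proof of Theorem 1.1 (concrete form): if `M` is a
free group, `A'` a finitely generated subgroup, `K` a subgroup such that `A' * K` is a free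
factor of `M` (i.e. `M = A' * K * L` for some `L`), and `M/⟨⟨K⟩⟩ ≅ E` with `E` finitely
generated, then `rank(A') ≤ rank(E)`. -/
theorem stmt4 {M E : Type*} [Group M] [IsFreeGroup M] [Group E]
    (A' K : Subgroup M)
    (hfac : ∃ L : Subgroup M, IsInternalFreeProduct (fun i : Fin 3 => ![A', K, L] i))
    (e : M ⧸ Subgroup.normalClosure (K : Set M) ≃* E)
    (hA' : Group.FG A') (hE : Group.FG E) :
    Group.rank A' ≤ Group.rank E := by
  haveI := hA'
  haveI := hE
  obtain ⟨L, hL⟩ := hfac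
  set H : Fin 3 → Subgroup M := fun i => ![A', K, L] i with hH
  -- the equivalence with the coproduct
  let ψ : Monoid.CoprodI (fun i => H i) ≃* M :=
    MulEquiv.ofBijective (Monoid.CoprodI.lift fun i => (H i).subtype) hL
  -- retraction onto A'
  let g : ∀ i : Fin 3, (H i) →* A' := fun i =>
    Fin.cases (MonoidHom.id A') (fun _ => 1) i
  let r : M →* A' := (Monoid.CoprodI.lift g).comp ψ.symm.toMonoidHom
  have hψ : ∀ i (x : H i), ψ (Monoid.CoprodI.of x) = (x : M) := by
    intro i x
    exact Monoid.CoprodI.lift_of (fun i => (H i).subtype) x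
  have hrA : ∀ x : A', r (x : M) = x := by
    intro x
    have : ψ.symm (x : M) = Monoid.CoprodI.of (i := (0 : Fin 3)) x := by
      apply ψ.injective
      rw [MulEquiv.apply_symm_apply]
      exact (hψ 0 x).symm
    simp only [r, MonoidHom.comp_apply, MulEquiv.coe_toMonoidHom, this,
      Monoid.CoprodI.lift_of]
    rfl
  have hrK : ∀ x ∈ K, r x = 1 := by
    intro x hx
    have : ψ.symm x = Monoid.CoprodI.of (i := (1 : Fin 3)) ⟨x, hx⟩ := by
      apply ψ.injective
      rw [MulEquiv.apply_symm_apply]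
      exact (hψ 1 ⟨x, hx⟩).symm
    simp only [r, MonoidHom.comp_apply, MulEquiv.coe_toMonoidHom, this,
      Monoid.CoprodI.lift_of]
    rfl
  have hker : Subgroup.normalClosure (K : Set M) ≤ r.ker := by
    apply Subgroup.normalClosure_le_normal
    intro x hx
    exact hrK x hx
  let rbar : (M ⧸ Subgroup.normalClosure (K : Set M)) →* A' :=
    QuotientGroup.lift _ r hker
  let f : E →* A' := rbar.comp e.symm.toMonoidHom
  have hf : Function.Surjective f := by
    intro a
    refine ⟨e (QuotientGroup.mk (a : M)), ?_⟩
    simp only [f, rbar, MonoidHom.comp_apply, MulEquiv.coe_toMonoidHom,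
      MulEquiv.symm_apply_apply, QuotientGroup.lift_mk']
    exact hrA a
  exact Group.rank_le_of_surjective f hf
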